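/- Let a, b ≥ 0 with (n−2)b ≤ 2a, and let A = A(n,-a,b) be the n×n matrix with -a on the diagonal and b elsewhere. For 2 ≤ p ≤ ∞, the induced p-norm of A satisfies a + b ≤ ‖A‖_p ≤ (a+b)^{2/p}·((n−1)b+a)^{1−2/p}. -/

import Mathlib

open scoped BigOperators ENNReal

/-- The `ℓ^p` norm of a vector in `ℝⁿ`, for `p ∈ [1, ∞]`. -/
noncomputable def vecPNorm {n : ℕ} (p : ℝ≥0∞) (x : Fin n → ℝ) : ℝ :=
  if p = ∞ then ⨆ i, |x i| else (∑ i, |x i| ^ p.toReal) ^ (1 / p.toReal)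

/-- The operator norm of a matrix acting on `(ℝⁿ, ‖·‖_p)`,
    i.e. `sup_{x ≠ 0} ‖Ax‖_p / ‖x‖_p`. -/
noncomputable def matPNorm {n : ℕ} (p : ℝ≥0∞) (A : Matrix (Fin n) (Fin n) ℝ) : ℝ :=
  sSup {r : ℝ | ∃ x : Fin n → ℝ, x ≠ 0 ∧ r = vecPNorm p (A.mulVec x) / vecPNorm p x}

/-- The circulant matrix `A(n, a, b)` with `a` on the diagonal and `b` elsewhere. -/
def circA (n : ℕ) (a b : ℝ) : Matrix (Fin n) (Fin n) ℝ :=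
  Matrix.of fun i j => if i = j then a else b

/-! The lower bound comes from the eigenvector `e₀ - e₁` of `A`, with eigenvalue `-(a + b)`.

For the upper bound, `A` has norm `a + b` on `ℓ²`: its eigenvalues are `-(a + b)` and
`(n - 1) b - a`, and `(n - 2) b ≤ 2 a` says exactly that the latter is at most `a + b`.
On `ℓ^∞` its norm is the maximal absolute row sum `(n - 1) b + a`. The Riesz–Thorin argument
interpolates between the two: for unit vectors `u`, `y` of `ℓ^p` the entire function
`F z = ∑ᵢ sgn(yᵢ) |yᵢ|^(p (1 + z) / 2) ∑ⱼ Aᵢⱼ sgn(uⱼ) |uⱼ|^(p (1 - z) / 2)`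
is bounded by `a + b` on `Re z = 0` (Cauchy–Schwarz) and by `(n - 1) b + a` on `Re z = 1`, so
the three lines theorem bounds it at `z = 1 - 2 / p`, where `y = A u / ‖A u‖_p` gives
`F z = ‖A u‖_p`. -/

open Finset Matrix

noncomputable def signedCpow (t : ℝ) (s : ℂ) : ℂ :=
  ((SignType.sign t : ℝ) : ℂ) * ((|t| : ℝ) : ℂ) ^ s

lemma norm_signedCpow_of_ne_zero {t : ℝ} (ht : t ≠ 0) (s : ℂ) :
    ‖signedCpow t s‖ = |t| ^ s.re := by
  have hsign : |(SignType.sign t : ℝ)| = 1 := by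
    rcases ht.lt_or_gt with h | h <;> simp [sign_neg, sign_pos, h]
  rw [signedCpow, norm_mul, Complex.norm_real, Complex.norm_cpow_eq_rpow_re_of_pos (abs_pos.2 ht),
    Real.norm_eq_abs, hsign, one_mul]

lemma norm_signedCpow {s : ℂ} (hs : s.re ≠ 0) (t : ℝ) : ‖signedCpow t s‖ = |t| ^ s.re := by
  rcases eq_or_ne t 0 with rfl | ht
  · simp [signedCpow, Real.zero_rpow hs]
  · exact norm_signedCpow_of_ne_zero ht s

lemma norm_signedCpow_le_one {t : ℝ} (ht : |t| ≤ 1) {s : ℂ} (hs : 0 ≤ s.re) :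
    ‖signedCpow t s‖ ≤ 1 := by
  rcases eq_or_ne t 0 with rfl | ht0
  · simp [signedCpow]
  · rw [norm_signedCpow_of_ne_zero ht0]
    exact Real.rpow_le_one (abs_nonneg t) ht hs

lemma signedCpow_one (t : ℝ) : signedCpow t 1 = t := by
  rw [signedCpow, Complex.cpow_one, ← Complex.ofReal_mul, sign_mul_abs]

lemma signedCpow_ofReal_mul_self {r : ℝ} (hr : 0 < r) (t : ℝ) :
    signedCpow t r * t = (|t| ^ (r + 1) : ℝ) := by
  rcases eq_or_ne t 0 with rfl | ht
  · simp [signedCpow, Real.zero_rpow (by positivity : r + 1 ≠ 0)]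
  rw [signedCpow, ← Complex.ofReal_cpow (abs_nonneg t), Real.rpow_add_one (abs_ne_zero.2 ht)]
  rw [← self_mul_sign t]
  push_cast
  ring

@[fun_prop]
lemma differentiable_signedCpow (t : ℝ) : Differentiable ℂ (signedCpow t) := by
  rcases eq_or_ne t 0 with rfl | ht
  · have hzero : signedCpow 0 = fun _ ↦ 0 := by ext; simp [signedCpow]
    exact hzero ▸ differentiable_const 0
  · exact (differentiable_id.const_cpow (Or.inl (by simpa using ht))).const_mul _

lemma abs_le_one_of_sum_rpow_eq_one {ι : Type*} [Fintype ι] {p : ℝ} (hp : 0 < p) {u : ι → ℝ}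
    (hu : ∑ j, |u j| ^ p = 1) (j : ι) : |u j| ≤ 1 := by
  rw [← Real.rpow_le_rpow_iff (abs_nonneg _) zero_le_one hp, Real.one_rpow, ← hu]
  exact single_le_sum (f := fun j ↦ |u j| ^ p) (fun _ _ ↦ by positivity) (mem_univ j)

lemma sum_abs_rpow_eq_one_of_norm_toLp_eq_one {ι : Type*} [Fintype ι] {P : ℝ≥0∞}
    (hP : 0 < P.toReal) {u : ι → ℝ} (hu : ‖WithLp.toLp P u‖ = 1) : ∑ j, |u j| ^ P.toReal = 1 := by
  rw [PiLp.norm_eq_sum hP] at hu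
  simp only [Real.norm_eq_abs] at hu
  calc ∑ j, |u j| ^ P.toReal = ((∑ j, |u j| ^ P.toReal) ^ (1 / P.toReal)) ^ P.toReal := by
        rw [one_div, Real.rpow_inv_rpow (sum_nonneg fun _ _ ↦ by positivity) hP.ne']
    _ = 1 := by rw [hu, Real.one_rpow]

section RieszThorin

variable {m n : Type*} [Fintype n] {A : Matrix m n ℝ} {β M : ℝ}

lemma norm_sum_mul_le_of_sum_abs_le (hA : ∀ i, ∑ j, |A i j| ≤ M) {U : n → ℂ}
    (hU : ∀ j, ‖U j‖ ≤ 1) (i : m) : ‖∑ j, (A i j : ℂ) * U j‖ ≤ M := by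
  calc ‖∑ j, (A i j : ℂ) * U j‖ ≤ ∑ j, |A i j| * ‖U j‖ := by
        refine (norm_sum_le _ _).trans_eq ?_
        simp
    _ ≤ ∑ j, |A i j| := sum_le_sum fun j _ ↦ mul_le_of_le_one_right (abs_nonneg _) (hU j)
    _ ≤ M := hA i

variable [Fintype m]

lemma sum_norm_sum_mul_sq_le (hA : ∀ x, ∑ i, (A *ᵥ x) i ^ 2 ≤ β ^ 2 * ∑ j, x j ^ 2) (U : n → ℂ) :
    ∑ i, ‖∑ j, (A i j : ℂ) * U j‖ ^ 2 ≤ β ^ 2 * ∑ j, ‖U j‖ ^ 2 := by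
  have hsplit : ∀ i, ‖∑ j, (A i j : ℂ) * U j‖ ^ 2
      = (A *ᵥ fun j ↦ (U j).re) i ^ 2 + (A *ᵥ fun j ↦ (U j).im) i ^ 2 := by
    intro i
    rw [Complex.sq_norm, Complex.normSq_apply, Complex.re_sum, Complex.im_sum]
    simp [mulVec, dotProduct, sq]
  simp only [hsplit, Complex.sq_norm, Complex.normSq_apply, ← sq, sum_add_distrib, mul_add]
  exact add_le_add (hA _) (hA _)

noncomputable def interpForm (A : Matrix m n ℝ) (p : ℝ) (u : n → ℝ) (y : m → ℝ) (z : ℂ) : ℂ :=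
  ∑ i, signedCpow (y i) (p / 2 * (1 + z)) * ∑ j, (A i j : ℂ) * signedCpow (u j) (p / 2 * (1 - z))

variable {p : ℝ} {u : n → ℝ} {y : m → ℝ}

lemma differentiable_interpForm : Differentiable ℂ (interpForm A p u y) := by
  unfold interpForm
  fun_prop

lemma interpForm_ofReal_one_sub_two_div (hp : p ≠ 0) :
    interpForm A p u y (1 - 2 / p : ℝ) = ∑ i, signedCpow (y i) (p - 1 : ℝ) * ((A *ᵥ u) i : ℂ) := by
  have hp' : (p : ℂ) ≠ 0 := by exact_mod_cast hp
  have hU : (p : ℂ) / 2 * (1 - (1 - 2 / p : ℝ)) = 1 := by push_cast; field_simp; ring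
  have hV : (p : ℂ) / 2 * (1 + (1 - 2 / p : ℝ)) = (p - 1 : ℝ) := by push_cast; field_simp; ring
  simp only [interpForm, hU, hV, signedCpow_one, mulVec, dotProduct]
  push_cast
  rfl

lemma norm_interpForm_le_sum_norm (z : ℂ) : ‖interpForm A p u y z‖ ≤
    ∑ i, ‖signedCpow (y i) (p / 2 * (1 + z))‖ *
      ‖∑ j, (A i j : ℂ) * signedCpow (u j) (p / 2 * (1 - z))‖ :=
  (norm_sum_le _ _).trans_eq (by simp only [norm_mul])

lemma norm_interpForm_le_of_re_eq_zero (hβ : 0 ≤ β)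
    (hA : ∀ x, ∑ i, (A *ᵥ x) i ^ 2 ≤ β ^ 2 * ∑ j, x j ^ 2) (hp : 0 < p)
    (hu : ∑ j, |u j| ^ p = 1) (hy : ∑ i, |y i| ^ p = 1) {z : ℂ} (hz : z.re = 0) :
    ‖interpForm A p u y z‖ ≤ β := by
  have hsq : ∀ (t : ℝ) (w : ℂ), w.re = 0 → ‖signedCpow t (p / 2 * (1 + w))‖ ^ 2 = |t| ^ p := by
    intro t w hw
    rw [norm_signedCpow (by simp [hw, hp.ne']), ← Real.rpow_natCast, ← Real.rpow_mul (abs_nonneg t)]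
    simp [hw]
  have hV : ∑ i, ‖signedCpow (y i) (p / 2 * (1 + z))‖ ^ 2 = 1 := by simp only [hsq _ _ hz, hy]
  have hU : ∑ j, ‖signedCpow (u j) (p / 2 * (1 - z))‖ ^ 2 = 1 := by
    simpa only [sub_eq_add_neg, hsq _ _ (by simp [hz] : (-z).re = 0)] using hu
  calc ‖interpForm A p u y z‖
      ≤ √(∑ i, ‖signedCpow (y i) (p / 2 * (1 + z))‖ ^ 2) *
          √(∑ i, ‖∑ j, (A i j : ℂ) * signedCpow (u j) (p / 2 * (1 - z))‖ ^ 2) :=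
        (norm_interpForm_le_sum_norm z).trans (Real.sum_mul_le_sqrt_mul_sqrt _ _ _)
    _ ≤ √1 * √(β ^ 2 * 1) := by
        rw [hV, ← hU]
        gcongr
        exact sum_norm_sum_mul_sq_le hA _
    _ = β := by simp [Real.sqrt_sq hβ]

lemma norm_interpForm_le_sum_mul (hA : ∀ i, ∑ j, |A i j| ≤ M) (hp : 0 ≤ p)
    (hu : ∀ j, |u j| ≤ 1) {z : ℂ} (hz : z.re ≤ 1) :
    ‖interpForm A p u y z‖ ≤ (∑ i, ‖signedCpow (y i) (p / 2 * (1 + z))‖) * M := by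
  have hU : ∀ j, ‖signedCpow (u j) (p / 2 * (1 - z))‖ ≤ 1 := fun j ↦
    norm_signedCpow_le_one (hu j) (by simp; nlinarith)
  rw [sum_mul]
  exact (norm_interpForm_le_sum_norm z).trans
    (sum_le_sum fun i _ ↦
      mul_le_mul_of_nonneg_left (norm_sum_mul_le_of_sum_abs_le hA hU i) (norm_nonneg _))

lemma norm_interpForm_le_of_re_eq_one (hA : ∀ i, ∑ j, |A i j| ≤ M) (hp : 0 < p)
    (hu : ∀ j, |u j| ≤ 1) (hy : ∑ i, |y i| ^ p = 1) {z : ℂ} (hz : z.re = 1) :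
    ‖interpForm A p u y z‖ ≤ M := by
  have hV : ∀ i, ‖signedCpow (y i) (p / 2 * (1 + z))‖ = |y i| ^ p := fun i ↦ by
    rw [norm_signedCpow (by simp [hz, hp.ne'])]
    congr 1
    simp [hz]
    ring
  simpa only [hV, hy, one_mul] using norm_interpForm_le_sum_mul (y := y) hA hp.le hu hz.le

open Complex.HadamardThreeLines in
lemma norm_interpForm_le_rpow_mul_rpow (hβ : 0 ≤ β)
    (hA₂ : ∀ x, ∑ i, (A *ᵥ x) i ^ 2 ≤ β ^ 2 * ∑ j, x j ^ 2) (hA : ∀ i, ∑ j, |A i j| ≤ M)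
    (hp : 2 ≤ p) (hu : ∑ j, |u j| ^ p = 1) (hy : ∑ i, |y i| ^ p = 1) :
    ‖interpForm A p u y (1 - 2 / p : ℝ)‖ ≤ β ^ (2 / p) * M ^ (1 - 2 / p) := by
  have hp₀ : 0 < p := by linarith
  have hu₁ := abs_le_one_of_sum_rpow_eq_one hp₀ hu
  have hy₁ := abs_le_one_of_sum_rpow_eq_one hp₀ hy
  have hmem : ((1 - 2 / p : ℝ) : ℂ) ∈ verticalClosedStrip 0 1 := by
    have : 2 / p ≤ 1 := (div_le_one hp₀).2 hp
    simp only [verticalClosedStrip, Set.mem_preimage, Complex.ofReal_re, Set.mem_Icc]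
    constructor <;> linarith [div_pos two_pos hp₀]
  have hbdd : BddAbove ((norm ∘ interpForm A p u y) '' verticalClosedStrip 0 1) := by
    refine ⟨Fintype.card m * |M|, ?_⟩
    rintro _ ⟨z, hz, rfl⟩
    have hV : ∀ i, ‖signedCpow (y i) (p / 2 * (1 + z))‖ ≤ 1 := fun i ↦
      norm_signedCpow_le_one (hy₁ i) (by simp; nlinarith [hz.1])
    calc ‖interpForm A p u y z‖ ≤ (∑ i, ‖signedCpow (y i) (p / 2 * (1 + z))‖) * M :=
          norm_interpForm_le_sum_mul hA hp₀.le hu₁ hz.2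
      _ ≤ (∑ i, ‖signedCpow (y i) (p / 2 * (1 + z))‖) * |M| :=
          mul_le_mul_of_nonneg_left (le_abs_self M) (sum_nonneg fun i _ ↦ norm_nonneg _)
      _ ≤ Fintype.card m * |M| := by
          gcongr
          exact (sum_le_sum fun i _ ↦ hV i).trans_eq (by simp)
  have h := norm_le_interp_of_mem_verticalClosedStrip₀₁' _ hmem
    differentiable_interpForm.diffContOnCl hbdd
    (fun z hz ↦ norm_interpForm_le_of_re_eq_zero hβ hA₂ hp₀ hu hy hz)
    (fun z hz ↦ norm_interpForm_le_of_re_eq_one hA hp₀ hu₁ hy hz)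
  rwa [Complex.ofReal_re, sub_sub_cancel] at h

lemma norm_toLp_mulVec_le_of_norm_toLp_eq_one (hβ : 0 ≤ β)
    (hA₂ : ∀ x, ∑ i, (A *ᵥ x) i ^ 2 ≤ β ^ 2 * ∑ j, x j ^ 2) (hA : ∀ i, ∑ j, |A i j| ≤ M)
    (hM : 0 ≤ M) {P : ℝ≥0∞} (hP : 2 ≤ P) (hP_top : P ≠ ∞) {u : n → ℝ}
    (hu : ‖WithLp.toLp P u‖ = 1) :
    ‖WithLp.toLp P (A *ᵥ u)‖ ≤ β ^ (2 / P.toReal) * M ^ (1 - 2 / P.toReal) := by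
  have : Fact (1 ≤ P) := ⟨le_trans (by norm_num) hP⟩
  set p := P.toReal
  have hp : 2 ≤ p := by simpa using ENNReal.toReal_mono hP_top hP
  set W := ‖WithLp.toLp P (A *ᵥ u)‖
  rcases (norm_nonneg _ : 0 ≤ W).eq_or_lt with hW | hW
  · exact hW.symm.le.trans (by positivity)
  set y := W⁻¹ • (A *ᵥ u)
  have hy : ‖WithLp.toLp P y‖ = 1 := by
    rw [WithLp.toLp_smul, norm_smul, norm_inv, norm_norm, inv_mul_cancel₀ hW.ne']
  have hy' := sum_abs_rpow_eq_one_of_norm_toLp_eq_one (by linarith) hy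
  have hAu : A *ᵥ u = W • y := by rw [smul_inv_smul₀ hW.ne']
  have hvalue : interpForm A p u y (1 - 2 / p : ℝ) = W := by
    rw [interpForm_ofReal_one_sub_two_div (by linarith), hAu]
    simp only [Pi.smul_apply, smul_eq_mul, Complex.ofReal_mul]
    simp only [mul_left_comm _ (W : ℂ), ← mul_sum,
      signedCpow_ofReal_mul_self (by linarith : 0 < p - 1), sub_add_cancel]
    rw [← Complex.ofReal_sum, hy', Complex.ofReal_one, mul_one]
  have key := norm_interpForm_le_rpow_mul_rpow hβ hA₂ hA hp
    (sum_abs_rpow_eq_one_of_norm_toLp_eq_one (by linarith) hu) hy'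
  rwa [hvalue, Complex.norm_real, Real.norm_of_nonneg hW.le] at key

lemma norm_toLp_mulVec_le_of_ne_top (hβ : 0 ≤ β)
    (hA₂ : ∀ x, ∑ i, (A *ᵥ x) i ^ 2 ≤ β ^ 2 * ∑ j, x j ^ 2) (hA : ∀ i, ∑ j, |A i j| ≤ M)
    (hM : 0 ≤ M) {P : ℝ≥0∞} (hP : 2 ≤ P) (hP_top : P ≠ ∞) (x : n → ℝ) :
    ‖WithLp.toLp P (A *ᵥ x)‖ ≤
      β ^ (2 / P.toReal) * M ^ (1 - 2 / P.toReal) * ‖WithLp.toLp P x‖ := by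
  have : Fact (1 ≤ P) := ⟨le_trans (by norm_num) hP⟩
  set N := ‖WithLp.toLp P x‖
  rcases (norm_nonneg _ : 0 ≤ N).eq_or_lt with hN | hN
  · have hx : x = 0 := by simpa using hN.symm
    simp only [hx, mulVec_zero, WithLp.toLp_zero, norm_zero]
    positivity
  have hu : ‖WithLp.toLp P (N⁻¹ • x)‖ = 1 := by
    rw [WithLp.toLp_smul, norm_smul, norm_inv, norm_norm, inv_mul_cancel₀ hN.ne']
  have hx : A *ᵥ x = N • A *ᵥ (N⁻¹ • x) := by rw [mulVec_smul, smul_inv_smul₀ hN.ne']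
  rw [hx, WithLp.toLp_smul, norm_smul, Real.norm_of_nonneg hN.le, mul_comm]
  gcongr
  exact norm_toLp_mulVec_le_of_norm_toLp_eq_one hβ hA₂ hA hM hP hP_top hu

lemma norm_toLp_infty_mulVec_le (hA : ∀ i, ∑ j, |A i j| ≤ M) (hM : 0 ≤ M) (x : n → ℝ) :
    ‖WithLp.toLp ∞ (A *ᵥ x)‖ ≤ M * ‖WithLp.toLp ∞ x‖ := by
  simp only [PiLp.norm_toLp]
  refine (pi_norm_le_iff_of_nonneg (by positivity)).2 fun i ↦ ?_
  calc ‖(A *ᵥ x) i‖ ≤ ∑ j, |A i j| * ‖x‖ := by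
        refine (norm_sum_le _ _).trans (sum_le_sum fun j _ ↦ ?_)
        rw [norm_mul, Real.norm_eq_abs]
        gcongr
        exact norm_le_pi_norm x j
    _ ≤ M * ‖x‖ := by
        rw [← sum_mul]
        gcongr
        exact hA i

lemma norm_toLp_mulVec_le_of_two_le (hβ : 0 ≤ β)
    (hA₂ : ∀ x, ∑ i, (A *ᵥ x) i ^ 2 ≤ β ^ 2 * ∑ j, x j ^ 2) (hA : ∀ i, ∑ j, |A i j| ≤ M)
    (hM : 0 ≤ M) {P : ℝ≥0∞} (hP : 2 ≤ P) (x : n → ℝ) :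
    ‖WithLp.toLp P (A *ᵥ x)‖ ≤
      β ^ (2 / P.toReal) * M ^ (1 - 2 / P.toReal) * ‖WithLp.toLp P x‖ := by
  rcases eq_or_ne P ∞ with rfl | hP_top
  · simpa using norm_toLp_infty_mulVec_le hA hM x
  · exact norm_toLp_mulVec_le_of_ne_top hβ hA₂ hA hM hP hP_top x

end RieszThorin

section Circulant

variable {n : ℕ}

lemma circA_mulVec_apply (a b : ℝ) (x : Fin n → ℝ) (i : Fin n) :
    (circA n a b *ᵥ x) i = b * ∑ j, x j + (a - b) * x i := by
  have hterm : ∀ j, (if i = j then a else b) * x j = b * x j + if i = j then (a - b) * x j else 0 :=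
    fun j ↦ by split_ifs <;> ring
  simp only [circA, mulVec, dotProduct, of_apply, hterm, sum_add_distrib, sum_ite_eq, mem_univ,
    if_true, mul_sum]

lemma sum_abs_circA (a b : ℝ) (i : Fin n) : ∑ j, |circA n a b i j| = |a| + (n - 1) * |b| := by
  have hterm : ∀ j, |circA n a b i j| = |b| + if i = j then |a| - |b| else 0 :=
    fun j ↦ by simp only [circA, of_apply]; split_ifs <;> ring
  simp only [hterm, sum_add_distrib, sum_ite_eq, mem_univ, if_true, sum_const, card_univ,
    Fintype.card_fin, nsmul_eq_mul]
  ring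

lemma sum_sq_circA_neg_mulVec_le {a b : ℝ} (hb : 0 ≤ b) (hab : ((n : ℝ) - 2) * b ≤ 2 * a)
    (x : Fin n → ℝ) : ∑ i, (circA n (-a) b *ᵥ x) i ^ 2 ≤ (a + b) ^ 2 * ∑ j, x j ^ 2 := by
  set S := ∑ j, x j
  have hexpand : ∑ i, (circA n (-a) b *ᵥ x) i ^ 2
      = b * S ^ 2 * (n * b - 2 * (a + b)) + (a + b) ^ 2 * ∑ j, x j ^ 2 := by
    simp only [circA_mulVec_apply]
    simp only [add_sq, sum_add_distrib, sum_const, card_univ, Fintype.card_fin, nsmul_eq_mul,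
      ← mul_sum, mul_pow]
    ring
  have : b * S ^ 2 * (n * b - 2 * (a + b)) ≤ 0 :=
    mul_nonpos_of_nonneg_of_nonpos (by positivity) (by linarith)
  linarith

lemma circA_mulVec_single_sub_single (a b : ℝ) (i j : Fin n) :
    circA n a b *ᵥ (Pi.single i 1 - Pi.single j 1) = (a - b) • (Pi.single i 1 - Pi.single j 1) := by
  ext k
  simp [circA_mulVec_apply, sum_sub_distrib]

end Circulant

section OperatorNorm

variable {n : ℕ} {p : ℝ≥0∞} [Fact (1 ≤ p)] {A : Matrix (Fin n) (Fin n) ℝ} {C : ℝ}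

lemma vecPNorm_eq_norm_toLp (x : Fin n → ℝ) : vecPNorm p x = ‖WithLp.toLp p x‖ := by
  rcases eq_or_ne p ∞ with rfl | hp_top
  · simp [vecPNorm, PiLp.norm_eq_ciSup]
  · have hp : 0 < p.toReal := ENNReal.toReal_pos (zero_lt_one.trans_le Fact.out).ne' hp_top
    simp [vecPNorm, hp_top, PiLp.norm_eq_sum hp]

lemma mem_upperBounds_of_norm_toLp_mulVec_le
    (h : ∀ x, ‖WithLp.toLp p (A *ᵥ x)‖ ≤ C * ‖WithLp.toLp p x‖) :
    C ∈ upperBounds {r : ℝ | ∃ x : Fin n → ℝ, x ≠ 0 ∧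
      r = vecPNorm p (A.mulVec x) / vecPNorm p x} := by
  rintro _ ⟨x, hx, rfl⟩
  rw [vecPNorm_eq_norm_toLp, vecPNorm_eq_norm_toLp, div_le_iff₀ (by simpa using hx)]
  exact h x

lemma matPNorm_le (hC : 0 ≤ C) (h : ∀ x, ‖WithLp.toLp p (A *ᵥ x)‖ ≤ C * ‖WithLp.toLp p x‖) :
    matPNorm p A ≤ C :=
  Real.sSup_le (mem_upperBounds_of_norm_toLp_mulVec_le h) hC

lemma abs_le_matPNorm_of_mulVec_eq_smul
    (h : ∀ x, ‖WithLp.toLp p (A *ᵥ x)‖ ≤ C * ‖WithLp.toLp p x‖) {x : Fin n → ℝ} (hx : x ≠ 0)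
    {c : ℝ} (hAx : A *ᵥ x = c • x) : |c| ≤ matPNorm p A := by
  refine le_csSup ⟨C, mem_upperBounds_of_norm_toLp_mulVec_le h⟩ ⟨x, hx, ?_⟩
  have hx' : ‖WithLp.toLp p x‖ ≠ 0 := by simpa using hx
  rw [hAx, vecPNorm_eq_norm_toLp, vecPNorm_eq_norm_toLp, WithLp.toLp_smul, norm_smul,
    Real.norm_eq_abs, mul_div_assoc, div_self hx', mul_one]

end OperatorNorm

theorem stmt_17 (n : ℕ) (hn : 2 ≤ n) (a b : ℝ) (ha : 0 ≤ a) (hb : 0 ≤ b)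
    (hcase : ((n : ℝ) - 2) * b ≤ 2 * a) (p : ℝ≥0∞) (hp : 2 ≤ p) :
    a + b ≤ matPNorm p (circA n (-a) b) ∧
      matPNorm p (circA n (-a) b) ≤
        (a + b) ^ (2 / p.toReal) * (((n : ℝ) - 1) * b + a) ^ (1 - 2 / p.toReal) := by
  have : Fact (1 ≤ p) := ⟨le_trans (by norm_num) hp⟩
  have hM : 0 ≤ ((n : ℝ) - 1) * b + a := by
    have : (2 : ℝ) ≤ n := by exact_mod_cast hn
    nlinarith
  have hbound := norm_toLp_mulVec_le_of_two_le (by positivity) (sum_sq_circA_neg_mulVec_le hb hcase)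
    (fun i ↦ by rw [sum_abs_circA, abs_neg, abs_of_nonneg ha, abs_of_nonneg hb, add_comm]) hM hp
  refine ⟨?_, matPNorm_le (by positivity) hbound⟩
  let i₀ : Fin n := ⟨0, by omega⟩
  let i₁ : Fin n := ⟨1, by omega⟩
  have hx : Pi.single i₀ 1 - Pi.single i₁ 1 ≠ (0 : Fin n → ℝ) := fun h ↦ by
    simpa [i₀, i₁, Pi.single_apply] using congrFun h i₀
  have h := abs_le_matPNorm_of_mulVec_eq_smul hbound hx (circA_mulVec_single_sub_single _ _ _ _)
  rwa [← neg_add', abs_neg, abs_of_nonneg (by positivity)] at h
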